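/- For any matrix A ∈ F₂^{r×ℓ}, one has 2^{−ℓ−r}·Σ_{x∈F₂^ℓ} Σ_{y∈F₂^r} (−1)^{yᵀAx} = 2^{−rank_{F₂}(A)}, where the F₂ scalar yᵀAx is interpreted as 0 or 1 in the exponent. Consequently, for every ordered bipartite graph G ∈ B_{ℓ,r} with bipartite adjacency matrix A(G), the vector χ_G is an eigenvector of the operator bPiv with eigenvalue 2^{−rank_{F₂}(A(G))}. -/

import Mathlib

/-!
For `v ∈ F₂^r`, `y ↦ (-1)^{y·v}` is a character of `F₂^r`, trivial exactly when `v = 0`; so the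
inner sum over `y` is `2^r` on `ker A` and `0` off it, and the double sum is
`2^r · |ker A| = 2^{ℓ + r - rank A}`.

Over `F₂`, `χ_G(H) = (-1)^{Σ G_ij H_ij}`, so `χ_G` is a character of the additive group of
matrices and `bPiv χ_G = c · χ_G` with `c` the average of `χ_G(K_{S,T})` over all `S, T`.
Writing `x, y` for the indicator vectors of `S, T`, `χ_G(K_{S,T}) = (-1)^{yᵀ G x}`, so `c` is the
normalized sum above.
-/

open Finset

/-- `χ_G(H) = (−1)^{|E(G) ∩ E(H)|}` for ordered bipartite graphs on parts of
sizes `ℓ` and `r`, identified with their bipartite adjacency matrices in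
`F₂^{r×ℓ}`. -/
noncomputable def chiB (l r : ℕ) (G : Matrix (Fin r) (Fin l) (ZMod 2)) :
    Matrix (Fin r) (Fin l) (ZMod 2) → ℝ :=
  fun H => (-1 : ℝ) ^ (Nat.card {p : Fin r × Fin l // G p.1 p.2 = 1 ∧ H p.1 p.2 = 1})

/-- The `bPiv` walk operator:
`(bPiv f)(H) = 2^{−ℓ−r}·Σ_{S ⊆ L, T ⊆ R} f(H △ K_{S,T})`, where `K_{S,T}` is
the complete bipartite graph between `S` and `T` (as a matrix, and symmetric
difference is addition over `F₂`). -/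
noncomputable def bPiv (l r : ℕ) (f : Matrix (Fin r) (Fin l) (ZMod 2) → ℝ) :
    Matrix (Fin r) (Fin l) (ZMod 2) → ℝ :=
  fun H => ((2 : ℝ) ^ (l + r))⁻¹ *
    ∑ S : Finset (Fin l), ∑ T : Finset (Fin r),
      f (H + Matrix.of fun i j => if i ∈ T ∧ j ∈ S then 1 else 0)

open Matrix

noncomputable def signChar : AddChar (ZMod 2) ℝ :=
  AddChar.zmodChar 2 (by norm_num : (-1 : ℝ) ^ 2 = 1)

lemma signChar_apply (a : ZMod 2) : signChar a = (-1) ^ a.val := rfl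

lemma signChar_natCast (n : ℕ) : signChar n = (-1) ^ n := AddChar.zmodChar_apply' _ n

lemma signChar_eq_one_iff (a : ZMod 2) : signChar a = 1 ↔ a = 0 := by
  rw [signChar_apply, neg_one_pow_eq_one_iff_even (by norm_num), ← ZMod.natCast_eq_zero_iff_even,
    ZMod.natCast_zmod_val]

lemma sum_signChar_dotProduct {ι : Type*} [Fintype ι] [DecidableEq ι] (v : ι → ZMod 2) :
    ∑ y, signChar (y ⬝ᵥ v) = if v = 0 then (2 : ℝ) ^ Fintype.card ι else 0 := by
  let ψ : AddChar (ι → ZMod 2) ℝ :=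
    signChar.compAddMonoidHom (AddMonoidHom.mk' (· ⬝ᵥ v) fun a b => add_dotProduct a b v)
  have hψ : ψ = 0 ↔ v = 0 := by
    simp [ψ, AddChar.eq_zero_iff, signChar_eq_one_iff, dotProduct_comm _ v, dotProduct_eq_zero_iff]
  simpa [ψ, hψ] using ψ.sum_eq_ite

lemma card_filter_mulVec_eq_zero {K m n : Type*} [Field K] [Fintype K] [DecidableEq K]
    [Fintype m] [Fintype n] [DecidableEq n] (A : Matrix m n K) :
    #{x | A *ᵥ x = 0} = Fintype.card K ^ (Fintype.card n - A.rank) := by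
  have hrank := A.mulVecLin.finrank_range_add_finrank_ker
  rw [Module.finrank_fintype_fun_eq_card] at hrank
  rw [← Fintype.card_subtype, ← Nat.card_eq_fintype_card]
  change Nat.card (LinearMap.ker A.mulVecLin) = _
  rw [Module.natCard_eq_pow_finrank (K := K), Nat.card_eq_fintype_card, Matrix.rank]
  congr 1
  omega

lemma inv_two_pow_mul_sum_signChar_dotProduct_mulVec {m n : Type*} [Fintype m] [Fintype n]
    [DecidableEq m] [DecidableEq n] (A : Matrix m n (ZMod 2)) :
    ((2 : ℝ) ^ (Fintype.card n + Fintype.card m))⁻¹ * ∑ x, ∑ y, signChar (y ⬝ᵥ A *ᵥ x)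
      = ((2 : ℝ) ^ A.rank)⁻¹ := by
  have hsum : ∑ x, ∑ y, signChar (y ⬝ᵥ A *ᵥ x)
      = (2 : ℝ) ^ (Fintype.card n - A.rank) * 2 ^ Fintype.card m := by
    simp [sum_signChar_dotProduct, Finset.sum_ite, card_filter_mulVec_eq_zero]
  obtain ⟨k, hk⟩ := Nat.exists_eq_add_of_le A.rank_le_card_width
  rw [hsum, hk, Nat.add_sub_cancel_left, pow_add, pow_add]
  field_simp

lemma chiB_apply (l r : ℕ) (G H : Matrix (Fin r) (Fin l) (ZMod 2)) :
    chiB l r G H = signChar (∑ i, ∑ j, G i j * H i j) := by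
  have hmul (a b : ZMod 2) : (if a = 1 ∧ b = 1 then 1 else 0) = a * b := by decide +revert
  rw [chiB, ← signChar_natCast, Nat.card_eq_fintype_card, Fintype.card_subtype,
    Finset.natCast_card_filter, Fintype.sum_prod_type]
  simp only [hmul]

lemma chiB_add (l r : ℕ) (G H K : Matrix (Fin r) (Fin l) (ZMod 2)) :
    chiB l r G (H + K) = chiB l r G H * chiB l r G K := by
  simp only [chiB_apply, Matrix.add_apply, mul_add, Finset.sum_add_distrib,
    AddChar.map_add_eq_mul]

def finsetEquivIndicator (α : Type*) [Fintype α] [DecidableEq α] : Finset α ≃ (α → ZMod 2) where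
  toFun S i := if i ∈ S then 1 else 0
  invFun x := {i | x i = 1}
  left_inv S := by ext i; simp
  right_inv x := by
    have hind (a : ZMod 2) : (if a = 1 then 1 else 0) = a := by decide +revert
    funext i
    simp [hind]

lemma chiB_completeBipartite (l r : ℕ) (G : Matrix (Fin r) (Fin l) (ZMod 2))
    (S : Finset (Fin l)) (T : Finset (Fin r)) :
    chiB l r G (Matrix.of fun i j => if i ∈ T ∧ j ∈ S then 1 else 0)
      = signChar (finsetEquivIndicator _ T ⬝ᵥ G *ᵥ finsetEquivIndicator _ S) := by
  rw [chiB_apply]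
  congr 1
  simp only [dotProduct, mulVec, Finset.mul_sum]
  refine Finset.sum_congr rfl fun i _ => Finset.sum_congr rfl fun j _ => ?_
  simp only [Matrix.of_apply, finsetEquivIndicator, Equiv.coe_fn_mk]
  rw [mul_left_comm, ite_zero_mul_ite_zero, one_mul]

/-- For any `A ∈ F₂^{r×ℓ}`,
`2^{−ℓ−r}·Σ_{x ∈ F₂^ℓ} Σ_{y ∈ F₂^r} (−1)^{yᵀAx} = 2^{−rank_{F₂}(A)}`;
consequently, for every ordered bipartite graph `G ∈ B_{ℓ,r}` with bipartite
adjacency matrix `A(G)`, the vector `χ_G` is an eigenvector of `bPiv` with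
eigenvalue `2^{−rank_{F₂}(A(G))}`. -/
theorem bPiv_eigenvalue (l r : ℕ) :
    (∀ A : Matrix (Fin r) (Fin l) (ZMod 2),
      ((2 : ℝ) ^ (l + r))⁻¹ *
          ∑ x : Fin l → ZMod 2, ∑ y : Fin r → ZMod 2,
            (-1 : ℝ) ^ (dotProduct y (A.mulVec x)).val
        = ((2 : ℝ) ^ A.rank)⁻¹) ∧
    (∀ G : Matrix (Fin r) (Fin l) (ZMod 2),
      bPiv l r (chiB l r G) = ((2 : ℝ) ^ G.rank)⁻¹ • chiB l r G) := by
  have hsum (A : Matrix (Fin r) (Fin l) (ZMod 2)) :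
      ((2 : ℝ) ^ (l + r))⁻¹ * ∑ x, ∑ y, signChar (y ⬝ᵥ A *ᵥ x) = ((2 : ℝ) ^ A.rank)⁻¹ := by
    simpa using inv_two_pow_mul_sum_signChar_dotProduct_mulVec A
  refine ⟨hsum, fun G => funext fun H => ?_⟩
  have hreindex : ∑ S, ∑ T, signChar (finsetEquivIndicator _ T ⬝ᵥ G *ᵥ finsetEquivIndicator _ S)
      = ∑ x, ∑ y, signChar (y ⬝ᵥ G *ᵥ x) := by
    rw [← (finsetEquivIndicator (Fin l)).sum_comp]
    simp only [← (finsetEquivIndicator (Fin r)).sum_comp]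
  rw [bPiv, Pi.smul_apply, smul_eq_mul, ← hsum G, ← hreindex]
  simp only [chiB_add, chiB_completeBipartite, ← Finset.mul_sum]
  ring
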